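/- arXiv:1701.03856 — 2 statements merged into one kernel-verified Lean document; each statement's English description precedes it below -/
import Mathlib

section
/- Let G be a 4-regular simple graph on n ≥ 8 vertices, and let u, v be distinct vertices lying in the same connected component of G. Then the number of 2-edge-cuts of G that separate u and v is at most n²/60. -/
/-!
A 2-edge cut `F` separating `u` from `v` is the edge boundary `∂S` of the vertex set `S` of the
component of `u` in `G - F`. When all degrees are even, so is every `|∂S|`; hence these *sides*
(`u ∈ S`, `v ∉ S`, `|∂S| = 2`, `S` connected to `u` in `G`) are determined by their boundary, by
submodularity they are closed under `∩` and `∪`, and two sides sharing a boundary edge are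
nested.

Fix a maximal chain `c 0 ⊂ ⋯ ⊂ c (r - 1)` of sides. Each boundary edge of a side bounds some member
of the chain, and both boundary edges of a side lie in a single *run*, a maximal block of
consecutive members in which neighbours share a boundary edge. A run of `ℓ` members carries at
most `ℓ + 1` edges and, since every side has exactly one boundary edge on a fixed `u`–`v` path, at
most `(ℓ + 1)² / 4` sides. Conversely, in a 4-regular graph `5 |X| ≤ |X|² + |∂X|`, so `c 0`, the
complement of `c (r - 1)` and each difference `c (k + 1) \ c k` within a run have at least five
vertices, a difference between two runs has one or at least four, and one-vertex differences are
never adjacent. Weighing the two estimates against each other bounds the number `N` of sides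
by `60 N ≤ n²`.
-/

open scoped Classical

open Finset

namespace Finset

variable {α : Type*}

section DecidableEq

variable [DecidableEq α]

theorem card_add_card_le_card_add_card {s t s' t' : Finset α} (hu : s' ∪ t' ⊆ s ∪ t)
    (hi : s' ∩ t' ⊆ s ∩ t) : #s' + #t' ≤ #s + #t := by
  rw [← card_union_add_card_inter s', ← card_union_add_card_inter s]
  exact Nat.add_le_add (card_le_card hu) (card_le_card hi)

theorem card_add_card_add_two_le {s t s' t' : Finset α} {a : α} (hu : s' ∪ t' ⊆ s ∪ t)
    (hi : s' ∩ t' ⊆ s ∩ t) (ha : a ∈ s ∩ t) (ha' : a ∉ s' ∪ t') :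
    #s' + #t' + 2 ≤ #s + #t := by
  have hu' := card_le_card (subset_erase.2 ⟨hu, ha'⟩)
  have hi' := card_le_card (subset_erase.2 ⟨hi, fun h => ha' (inter_subset_union h)⟩)
  rw [card_erase_of_mem (inter_subset_union ha)] at hu'
  rw [card_erase_of_mem ha] at hi'
  have := card_pos.2 ⟨a, ha⟩
  have := card_pos.2 ⟨a, inter_subset_union ha⟩
  rw [← card_union_add_card_inter s', ← card_union_add_card_inter s]
  omega

theorem card_symmDiff_add_two_mul_card_inter (s t : Finset α) :
    #(symmDiff s t) + 2 * #(s ∩ t) = #s + #t := by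
  rw [symmDiff_def, sup_eq_union, card_union_of_disjoint disjoint_sdiff_sdiff]
  have := card_sdiff_add_card_inter s t
  have := card_sdiff_add_card_inter t s
  rw [inter_comm t] at this
  omega

theorem card_biUnion_Icc_le (A : ℕ → Finset α) {a b : ℕ}
    (hab : a ≤ b) (hA : ∀ i ∈ Icc a b, #(A i) ≤ 2)
    (hA' : ∀ i ∈ Ico a b, (A i ∩ A (i + 1)).Nonempty) : #((Icc a b).biUnion A) + a ≤ b + 2 := by
  induction b, hab using Nat.le_induction with
  | base =>
    have := hA a (by simp)
    simp only [Icc_self, singleton_biUnion]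
    omega
  | succ b hab ih =>
    have hIcc : Icc a (b + 1) = insert (b + 1) (Icc a b) := by ext; simp; omega
    obtain ⟨y, hy⟩ := hA' b (by simp; omega)
    have hy' : y ∈ A (b + 1) ∩ (Icc a b).biUnion A :=
      mem_inter.2 ⟨(mem_inter.1 hy).2, mem_biUnion.2 ⟨b, by simp; omega, (mem_inter.1 hy).1⟩⟩
    have := card_union_add_card_inter (A (b + 1)) ((Icc a b).biUnion A)
    have := card_pos.2 ⟨y, hy'⟩
    have := hA (b + 1) (by simp; omega)
    have := ih (fun i hi => hA i (by simp at hi ⊢; omega))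
      fun i hi => hA' i (by simp at hi ⊢; omega)
    rw [hIcc, biUnion_insert]
    omega

variable {s t a : Finset α}

theorem inter_subset_or_subset_inter (hs : s ⊆ a ∨ a ⊆ s) (ht : t ⊆ a ∨ a ⊆ t) :
    s ∩ t ⊆ a ∨ a ⊆ s ∩ t := by
  rcases ht with ht | ht
  · exact Or.inl (inter_subset_right.trans ht)
  · exact hs.imp (inter_subset_left.trans ·) (subset_inter · ht)

theorem union_subset_or_subset_union (hs : s ⊆ a ∨ a ⊆ s) (ht : t ⊆ a ∨ a ⊆ t) :
    s ∪ t ⊆ a ∨ a ⊆ s ∪ t := by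
  rcases ht with ht | ht
  · exact hs.imp (union_subset · ht) (·.trans subset_union_left)
  · exact Or.inr (ht.trans subset_union_right)

end DecidableEq

theorem card_filter_incomparable_lt {c : ℕ → Finset α} {T : Finset α} {r k : ℕ} (hk : k < r)
    (hkT : ¬(T ⊆ c k ∨ c k ⊆ T)) {T' : Finset α}
    (hT' : ∀ i < r, (T ⊆ c i ∨ c i ⊆ T) → T' ⊆ c i ∨ c i ⊆ T') (hT'k : T' ⊆ c k ∨ c k ⊆ T') :
    #{i ∈ range r | ¬(T' ⊆ c i ∨ c i ⊆ T')} <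
      #{i ∈ range r | ¬(T ⊆ c i ∨ c i ⊆ T)} := by
  refine card_lt_card ((ssubset_iff_of_subset fun i hi => ?_).2 ⟨k, ?_, ?_⟩)
  · simp only [mem_filter, mem_range] at hi ⊢
    exact ⟨hi.1, fun h => hi.2 (hT' i hi.1 h)⟩
  · exact mem_filter.2 ⟨mem_range.2 hk, hkT⟩
  · exact fun h => (mem_filter.1 h).2 hT'k

theorem exists_strictMonoOn_of_isChain [PartialOrder α] [Nonempty α] (C : Finset α)
    (hC : IsChain (· ≤ ·) (C : Set α)) :
    ∃ c : ℕ → α, StrictMonoOn c (Set.Iio #C) ∧ ∀ a, a ∈ C ↔ ∃ i < #C, c i = a := by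
  induction hn : #C generalizing C with
  | zero =>
    exact ⟨fun _ => Classical.arbitrary _, by simp [StrictMonoOn], by simp [card_eq_zero.1 hn]⟩
  | succ n ih =>
    obtain ⟨m, hm⟩ := C.exists_minimal (card_pos.1 (by omega))
    have hle : ∀ a ∈ C, m ≤ a := fun a ha =>
      (hC.total hm.prop ha).elim id fun h => (hm.eq_of_le ha h).ge
    obtain ⟨c, hc, hmem⟩ :=
      ih (C.erase m) (hC.mono (by simp)) (by simp [card_erase_of_mem hm.prop, hn])
    refine ⟨fun i => i.casesOn m c, ?_, fun a => ?_⟩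
    · rintro (_ | i) hi (_ | j) hj hij
      · exact absurd hij (lt_irrefl 0)
      · obtain ⟨hjm, hjC⟩ := mem_erase.1 ((hmem _).2 ⟨j, by simpa using hj, rfl⟩)
        exact lt_of_le_of_ne (hle _ hjC) (Ne.symm hjm)
      · exact absurd hij (Nat.not_lt_zero _)
      · exact hc (by simpa using hi) (by simpa using hj) (by simpa using hij)
    · constructor
      · intro ha
        by_cases ham : a = m
        · exact ⟨0, by omega, ham.symm⟩
        · obtain ⟨i, hi, rfl⟩ := (hmem a).1 (mem_erase.2 ⟨ham, ha⟩)
          exact ⟨i + 1, by omega, rfl⟩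
      · rintro ⟨_ | i, hi, rfl⟩
        · exact hm.prop
        · exact (mem_erase.1 ((hmem _).2 ⟨i, by omega, rfl⟩)).2

theorem sum_add_two_sq_add_four_le (g : ℕ → ℕ) (t : ℕ) :
    ∑ q ∈ range t, (g q + 2) ^ 2 + 4 ≤ (∑ q ∈ range t, g q + 2) ^ 2 + 4 * t := by
  induction t with
  | zero => simp
  | succ t ih =>
    rw [sum_range_succ, sum_range_succ]
    nlinarith [Nat.zero_le ((∑ q ∈ range t, g q) * g t)]

theorem two_mul_card_le_of_forall_add_one_notMem {P : Finset ℕ} {m : ℕ}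
    (hP : P ⊆ range m) (h : ∀ k ∈ P, k + 1 ∉ P) : 2 * #P ≤ m + 1 := by
  have hdisj : Disjoint P (P.map (addRightEmbedding 1)) := disjoint_right.2 fun a ha haP => by
    obtain ⟨b, hb, rfl⟩ := mem_map.1 ha
    exact h b hb haP
  have hsub : P ∪ P.map (addRightEmbedding 1) ⊆ range (m + 1) := union_subset
    (hP.trans (range_subset_range.2 (Nat.le_succ m))) fun a ha => by
      obtain ⟨b, hb, rfl⟩ := mem_map.1 ha
      simpa using mem_range.1 (hP hb)
  have := card_le_card hsub
  rw [card_union_of_disjoint hdisj, card_map, card_range] at this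
  omega

end Finset

namespace Nat

variable {p : ℕ → Prop} [DecidablePred p]

theorem count_eq_count_of_forall_not {i j : ℕ} (hij : i ≤ j)
    (h : ∀ k, i ≤ k → k < j → ¬p k) : count p i = count p j := by
  induction j, hij using Nat.le_induction with
  | base => rfl
  | succ j hij ih =>
    rw [count_succ, if_neg (h j hij (lt_add_one j)), add_zero,
      ih fun k hik hkj => h k hik (hkj.trans (lt_add_one j))]

theorem exists_count_eq {m q : ℕ} (hq : q ≤ count p m) : ∃ i ≤ m, count p i = q := by
  induction m with
  | zero => exact ⟨0, le_rfl, by simp_all⟩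
  | succ m ih =>
    by_cases hqm : q ≤ count p m
    · obtain ⟨i, hi, hiq⟩ := ih hqm
      exact ⟨i, by omega, hiq⟩
    · refine ⟨m + 1, le_rfl, ?_⟩
      rw [count_succ] at hq ⊢
      split_ifs at hq ⊢ <;> omega

theorem sixty_mul_le_sq {N L B₁ B₄ n : ℕ} (hN : 4 * N ≤ (L + 2) ^ 2 + 4 * (B₁ + B₄))
    (hn : 10 + 5 * L + B₁ + 4 * B₄ ≤ n) (hB₁ : B₁ ≤ L + B₄ + 1) : 60 * N ≤ n ^ 2 := by
  have key : 15 * ((L + 2) ^ 2 + 4 * (B₁ + B₄)) ≤ (10 + 5 * L + B₁ + 4 * B₄) ^ 2 := by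
    rcases Nat.eq_zero_or_pos B₁ with rfl | hB
    · nlinarith
    · have : B₄ ≤ B₁ * B₄ := Nat.le_mul_of_pos_left B₄ hB
      nlinarith [Nat.le_mul_self B₄, Nat.zero_le (L * B₄), Nat.zero_le (L * B₁)]
  nlinarith [Nat.pow_le_pow_left hn 2]

end Nat

namespace SimpleGraph

variable {V : Type*} [Fintype V] {G : SimpleGraph V}

/-! ### Edge boundaries -/

noncomputable def edgeBoundary (G : SimpleGraph V) (S : Finset V) : Finset (Sym2 V) :=
  G.edgeFinset.filter fun e => (∃ x ∈ e, x ∈ S) ∧ ∃ y ∈ e, y ∉ S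

variable {S S' S'' T A B C : Finset V} {u v x y : V} {e f : Sym2 V}

theorem mk_mem_edgeBoundary : s(x, y) ∈ G.edgeBoundary S ↔ G.Adj x y ∧ (x ∈ S ↔ y ∉ S) := by
  simp only [edgeBoundary, mem_filter, mem_edgeFinset, mem_edgeSet, Sym2.mem_iff,
    exists_eq_or_imp, exists_eq_left]
  tauto

theorem edgeBoundary_compl : G.edgeBoundary Sᶜ = G.edgeBoundary S := by
  ext e
  induction e using Sym2.ind
  simp only [mk_mem_edgeBoundary, mem_compl]
  tauto

theorem edgeBoundary_empty : G.edgeBoundary ∅ = ∅ := by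
  ext e
  induction e using Sym2.ind
  simp [mk_mem_edgeBoundary]

theorem edgeBoundary_inter_union_subset :
    G.edgeBoundary (S ∩ T) ∪ G.edgeBoundary (S ∪ T) ⊆ G.edgeBoundary S ∪ G.edgeBoundary T := by
  intro e
  induction e using Sym2.ind
  simp only [mem_union, mk_mem_edgeBoundary, mem_inter]
  tauto

theorem edgeBoundary_inter_inter_subset :
    G.edgeBoundary (S ∩ T) ∩ G.edgeBoundary (S ∪ T) ⊆ G.edgeBoundary S ∩ G.edgeBoundary T := by
  intro e
  induction e using Sym2.ind
  simp only [mem_union, mk_mem_edgeBoundary, mem_inter]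
  tauto

theorem edgeBoundary_sdiff_union_subset :
    G.edgeBoundary (S \ T) ∪ G.edgeBoundary (T \ S) ⊆ G.edgeBoundary S ∪ G.edgeBoundary T := by
  intro e
  induction e using Sym2.ind
  simp only [mem_union, mk_mem_edgeBoundary, mem_sdiff]
  tauto

theorem edgeBoundary_sdiff_inter_subset :
    G.edgeBoundary (S \ T) ∩ G.edgeBoundary (T \ S) ⊆ G.edgeBoundary S ∩ G.edgeBoundary T := by
  intro e
  induction e using Sym2.ind
  simp only [mem_inter, mk_mem_edgeBoundary, mem_sdiff]
  tauto

theorem edgeBoundary_sdiff_subset : G.edgeBoundary (S \ T) ⊆ G.edgeBoundary S ∪ G.edgeBoundary T :=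
  subset_union_left.trans edgeBoundary_sdiff_union_subset

theorem notMem_edgeBoundary_inter_union_or_sdiff
    (hS : e ∈ G.edgeBoundary S) (hT : e ∈ G.edgeBoundary T) :
    e ∉ G.edgeBoundary (S ∩ T) ∪ G.edgeBoundary (S ∪ T) ∨
      e ∉ G.edgeBoundary (S \ T) ∪ G.edgeBoundary (T \ S) := by
  induction e using Sym2.ind
  simp only [mem_union, mk_mem_edgeBoundary, mem_inter, mem_sdiff] at *
  tauto

theorem mem_edgeBoundary_inter_or_union (hS : e ∈ G.edgeBoundary S) (hT : e ∉ G.edgeBoundary T) :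
    e ∈ G.edgeBoundary (S ∩ T) ∨ e ∈ G.edgeBoundary (S ∪ T) := by
  induction e using Sym2.ind
  simp only [mk_mem_edgeBoundary, mem_inter, mem_union] at *
  tauto

theorem mem_edgeBoundary_of_subset_of_subset (hAB : A ⊆ B) (hBC : B ⊆ C)
    (hA : e ∈ G.edgeBoundary A) (hC : e ∈ G.edgeBoundary C) : e ∈ G.edgeBoundary B := by
  induction e using Sym2.ind with | _ x y
  rw [mk_mem_edgeBoundary] at *
  have := @hAB x; have := @hAB y; have := @hBC x; have := @hBC y
  tauto

theorem mem_edgeBoundary_inter_of_subset (hA : A ⊆ S ∩ T) (heA : e ∈ G.edgeBoundary A)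
    (heS : e ∈ G.edgeBoundary S) : e ∈ G.edgeBoundary (S ∩ T) := by
  induction e using Sym2.ind with | _ x y
  rw [mk_mem_edgeBoundary] at *
  have := @hA x; have := @hA y
  simp only [mem_inter] at *
  tauto

theorem mem_edgeBoundary_union_of_subset (hB : S ∪ T ⊆ B) (heB : e ∈ G.edgeBoundary B)
    (heS : e ∈ G.edgeBoundary S) : e ∈ G.edgeBoundary (S ∪ T) := by
  induction e using Sym2.ind with | _ x y
  rw [mk_mem_edgeBoundary] at *
  have := @hB x; have := @hB y
  simp only [mem_union] at *
  tauto

theorem notMem_edgeBoundary_sdiff (hAB : A ⊆ B) (hA : e ∈ G.edgeBoundary A)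
    (hB : e ∈ G.edgeBoundary B) : e ∉ G.edgeBoundary (B \ A) := by
  induction e using Sym2.ind with | _ x y
  rw [mk_mem_edgeBoundary] at *
  have := @hAB x; have := @hAB y
  simp only [mem_sdiff] at *
  tauto

theorem edgeBoundary_singleton : G.edgeBoundary {x} = (G.neighborFinset x).image (s(x, ·)) := by
  ext e
  induction e using Sym2.ind with | _ a b
  simp only [mk_mem_edgeBoundary, mem_singleton, mem_image, mem_neighborFinset, Sym2.eq_iff]
  constructor
  · rintro ⟨hab, h⟩
    by_cases ha : a = x
    · exact ⟨b, ha ▸ hab, Or.inl ⟨ha.symm, rfl⟩⟩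
    · obtain rfl : b = x := by tauto
      exact ⟨a, hab.symm, Or.inr ⟨rfl, rfl⟩⟩
  · rintro ⟨z, hz, ⟨rfl, rfl⟩ | ⟨rfl, rfl⟩⟩
    · exact ⟨hz, iff_not_comm.1 (by simp [hz.ne'])⟩
    · exact ⟨hz.symm, by simp [hz.ne']⟩

theorem card_edgeBoundary_singleton : #(G.edgeBoundary {x}) = G.degree x := by
  rw [edgeBoundary_singleton, card_image_of_injective _ fun _ _ => Sym2.congr_right.1]
  rfl

theorem card_edgeBoundary_insert (hx : x ∉ S) :
    #(G.edgeBoundary (insert x S)) + 2 * #(G.edgeBoundary S ∩ G.edgeBoundary {x}) =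
      #(G.edgeBoundary S) + G.degree x := by
  have : G.edgeBoundary (insert x S) = symmDiff (G.edgeBoundary S) (G.edgeBoundary {x}) := by
    ext e
    induction e using Sym2.ind with | _ a b
    simp only [mk_mem_edgeBoundary, mem_symmDiff, mem_insert, mem_singleton]
    by_cases ha : a = x <;> by_cases hb : b = x <;> subst_vars <;> simp_all <;> tauto
  rw [this, card_symmDiff_add_two_mul_card_inter, card_edgeBoundary_singleton]

theorem card_edgeBoundary_inter_edgeBoundary_singleton_le (hx : x ∉ S) :
    #(G.edgeBoundary S ∩ G.edgeBoundary {x}) ≤ #S := by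
  refine le_trans (card_le_card fun e he => ?_) (card_image_le (f := (s(x, ·))))
  rw [mem_inter, edgeBoundary_singleton, mem_image] at he
  obtain ⟨he, y, -, rfl⟩ := he
  rw [mk_mem_edgeBoundary] at he
  exact mem_image_of_mem _ (not_not.1 (he.2.not.1 hx))

theorem even_card_edgeBoundary (hdeg : ∀ x, Even (G.degree x)) (S : Finset V) :
    Even #(G.edgeBoundary S) := by
  induction S using Finset.induction_on with
  | empty => simp [edgeBoundary_empty]
  | insert x S hx ih =>
    have := card_edgeBoundary_insert (G := G) hx
    obtain ⟨a, ha⟩ := ih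
    obtain ⟨b, hb⟩ := hdeg x
    exact ⟨a + b - #(G.edgeBoundary S ∩ G.edgeBoundary {x}), by omega⟩

theorem succ_mul_card_le_sq_add_card_edgeBoundary {d : ℕ} (hreg : G.IsRegularOfDegree d)
    (S : Finset V) : (d + 1) * #S ≤ #S ^ 2 + #(G.edgeBoundary S) := by
  induction S using Finset.induction_on with
  | empty => simp
  | insert x S hx ih =>
    have := card_edgeBoundary_insert (G := G) hx
    have := card_edgeBoundary_inter_edgeBoundary_singleton_le (G := G) hx
    rw [hreg x] at *
    rw [card_insert_of_notMem hx]
    nlinarith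

theorem five_le_card_of_card_edgeBoundary_le_three (hreg : G.IsRegularOfDegree 4)
    (hS : S.Nonempty) (h : #(G.edgeBoundary S) ≤ 3) : 5 ≤ #S := by
  have := succ_mul_card_le_sq_add_card_edgeBoundary hreg S
  have := card_pos.2 hS
  generalize #S = m at *
  by_contra! h'
  interval_cases m <;> omega

theorem card_eq_one_or_four_le_of_card_edgeBoundary_le_four (hreg : G.IsRegularOfDegree 4)
    (hS : S.Nonempty) (h : #(G.edgeBoundary S) ≤ 4) : #S = 1 ∨ 4 ≤ #S := by
  have := succ_mul_card_le_sq_add_card_edgeBoundary hreg S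
  have := card_pos.2 hS
  generalize #S = m at *
  by_contra! h'
  obtain ⟨h₁, h₂⟩ := h'
  interval_cases m <;> omega

theorem card_edgeBoundary_le_card_sdiff (h₁ : S ⊆ S') (h₂ : S' ⊆ S'') (hx : S' \ S = {x})
    (hd₁ : ¬(G.edgeBoundary S ∩ G.edgeBoundary S').Nonempty)
    (hd₂ : ¬(G.edgeBoundary S' ∩ G.edgeBoundary S'').Nonempty) :
    #(G.edgeBoundary S') ≤ #(S'' \ S') := by
  -- every boundary edge of `S'` joins the new vertex `x` to a vertex of `S'' \ S'`
  have key : ∀ a b, G.Adj a b → a ∈ S' → b ∉ S' → s(a, b) ∈ (S'' \ S').image (s(x, ·)) := by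
    intro a b hab ha hb
    have he : s(a, b) ∈ G.edgeBoundary S' := mk_mem_edgeBoundary.2 ⟨hab, iff_of_true ha hb⟩
    obtain rfl : a = x := by
      by_contra hax
      have haS : a ∈ S := by
        by_contra haS
        exact hax (mem_singleton.1 (hx ▸ mem_sdiff.2 ⟨ha, haS⟩))
      exact hd₁ ⟨_, mem_inter.2
        ⟨mk_mem_edgeBoundary.2 ⟨hab, iff_of_true haS fun h => hb (h₁ h)⟩, he⟩⟩
    have hb'' : b ∈ S'' := by
      by_contra hb''
      exact hd₂ ⟨_, mem_inter.2 ⟨he, mk_mem_edgeBoundary.2 ⟨hab, iff_of_true (h₂ ha) hb''⟩⟩⟩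
    exact mem_image_of_mem _ (mem_sdiff.2 ⟨hb'', hb⟩)
  refine (card_le_card (t := (S'' \ S').image (s(x, ·))) fun e he => ?_).trans card_image_le
  induction e using Sym2.ind with | _ a b
  obtain ⟨hab, h⟩ := mk_mem_edgeBoundary.1 he
  by_cases ha : a ∈ S'
  · exact key a b hab ha (h.1 ha)
  · rw [Sym2.eq_swap]
    exact key b a hab.symm (not_not.1 (h.not.1 ha)) ha

theorem edgeBoundary_nonempty_of_reachable {a b : V} (h : G.Reachable a b) (ha : a ∈ S)
    (hb : b ∉ S) : (G.edgeBoundary S).Nonempty := by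
  obtain ⟨p⟩ := h
  obtain ⟨d, -, hd₁, hd₂⟩ := p.exists_boundary_dart S ha hb
  exact ⟨d.edge, mk_mem_edgeBoundary.2 ⟨d.adj, iff_of_true hd₁ hd₂⟩⟩

theorem two_le_card_edgeBoundary (hdeg : ∀ x, Even (G.degree x)) {a b : V}
    (h : G.Reachable a b) (ha : a ∈ S) (hb : b ∉ S) : 2 ≤ #(G.edgeBoundary S) := by
  have := card_pos.2 (edgeBoundary_nonempty_of_reachable h ha hb)
  obtain ⟨k, hk⟩ := even_card_edgeBoundary hdeg S
  omega

theorem Walk.even_countP_edges_mem_edgeBoundary_iff {a b : V} (p : G.Walk a b) :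
    Even (p.edges.countP (· ∈ G.edgeBoundary S)) ↔ (a ∈ S ↔ b ∈ S) := by
  induction p with
  | nil => simp
  | cons h p ih =>
    simp only [Walk.edges_cons, List.countP_cons, decide_eq_true_eq, mk_mem_edgeBoundary, h,
      true_and]
    split_ifs <;> simp only [Nat.even_add_one, add_zero, ih] <;> tauto

theorem Walk.IsTrail.odd_card_edgeBoundary_inter {a b : V} {p : G.Walk a b} (hp : p.IsTrail)
    (ha : a ∈ S) (hb : b ∉ S) : Odd #(G.edgeBoundary S ∩ p.edges.toFinset) := by
  rw [inter_comm, ← filter_mem_eq_inter, List.filter_toFinset,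
    List.toFinset_card_of_nodup (hp.edges_nodup.filter _), ← List.countP_eq_length_filter,
    ← Nat.not_even_iff_odd, p.even_countP_edges_mem_edgeBoundary_iff]
  tauto

theorem mem_of_reachable_deleteEdges_edgeBoundary {a b : V}
    (h : (G.deleteEdges ↑(G.edgeBoundary S)).Reachable a b) (ha : a ∈ S) : b ∈ S := by
  by_contra hb
  obtain ⟨p⟩ := h
  obtain ⟨d, -, hd₁, hd₂⟩ := p.exists_boundary_dart S ha hb
  have hadj := d.adj
  rw [deleteEdges_adj] at hadj
  exact hadj.2 (mk_mem_edgeBoundary.2 ⟨hadj.1, iff_of_true hd₁ hd₂⟩)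

theorem coe_edgeBoundary_subset {F : Set (Sym2 V)}
    (hS : ∀ a b, a ∈ S → (G.deleteEdges F).Adj a b → b ∈ S) : ↑(G.edgeBoundary S) ⊆ F := by
  intro e he
  induction e using Sym2.ind with | _ a b
  rw [mem_coe, mk_mem_edgeBoundary] at he
  by_contra hF
  have hab : (G.deleteEdges F).Adj a b := (deleteEdges_adj ..).2 ⟨he.1, hF⟩
  by_cases ha : a ∈ S
  · exact he.2.1 ha (hS a b ha hab)
  · exact ha (hS b a (not_not.1 (he.2.not.1 ha)) hab.symm)

/-! ### Sides of two-edge cuts -/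

structure IsTwoCutSide (G : SimpleGraph V) (u v : V) (S : Finset V) : Prop where
  left_mem : u ∈ S
  right_notMem : v ∉ S
  card_edgeBoundary : #(G.edgeBoundary S) = 2
  reachable : ∀ x ∈ S, G.Reachable u x

noncomputable def twoCutSides (G : SimpleGraph V) (u v : V) : Finset (Finset V) :=
  univ.filter (G.IsTwoCutSide u v)

theorem mem_twoCutSides : S ∈ G.twoCutSides u v ↔ G.IsTwoCutSide u v S := by
  simp [twoCutSides]

namespace IsTwoCutSide

theorem exists_mem_edgeBoundary_notMem (hS : G.IsTwoCutSide u v S) (hT : G.IsTwoCutSide u v T)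
    (hfT : f ∈ G.edgeBoundary T) (hfS : f ∉ G.edgeBoundary S) :
    ∃ g ∈ G.edgeBoundary S, g ∉ G.edgeBoundary T :=
  not_subset.1 fun h => hfS <|
    eq_of_subset_of_card_le h (hT.card_edgeBoundary.trans hS.card_edgeBoundary.symm).le ▸ hfT

variable (hdeg : ∀ x, Even (G.degree x)) (huv : G.Reachable u v)

include hdeg huv in
theorem inter_union (hS : G.IsTwoCutSide u v S) (hT : G.IsTwoCutSide u v T) :
    G.IsTwoCutSide u v (S ∩ T) ∧ G.IsTwoCutSide u v (S ∪ T) := by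
  have hI : 2 ≤ #(G.edgeBoundary (S ∩ T)) := two_le_card_edgeBoundary hdeg huv
    (mem_inter.2 ⟨hS.left_mem, hT.left_mem⟩) fun h => hS.right_notMem (mem_inter.1 h).1
  have hU : 2 ≤ #(G.edgeBoundary (S ∪ T)) := two_le_card_edgeBoundary hdeg huv
    (mem_union_left _ hS.left_mem) (by simp [hS.right_notMem, hT.right_notMem])
  have := card_add_card_le_card_add_card (G.edgeBoundary_inter_union_subset (S := S) (T := T))
    edgeBoundary_inter_inter_subset
  rw [hS.card_edgeBoundary, hT.card_edgeBoundary] at this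
  exact ⟨⟨mem_inter.2 ⟨hS.left_mem, hT.left_mem⟩, fun h => hS.right_notMem (mem_inter.1 h).1,
      by omega, fun x hx => hS.reachable x (mem_inter.1 hx).1⟩,
    ⟨mem_union_left _ hS.left_mem, by simp [hS.right_notMem, hT.right_notMem], by omega,
      fun x hx => (mem_union.1 hx).elim (hS.reachable x) (hT.reachable x)⟩⟩

include hdeg huv in
theorem subset_or_subset (hS : G.IsTwoCutSide u v S) (hT : G.IsTwoCutSide u v T)
    (heS : e ∈ G.edgeBoundary S) (heT : e ∈ G.edgeBoundary T) : S ⊆ T ∨ T ⊆ S := by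
  have := hS.card_edgeBoundary
  have := hT.card_edgeBoundary
  obtain ⟨hI, hU⟩ := hS.inter_union hdeg huv hT
  -- the corners `S ∩ T`, `S ∪ T`, `S \ T`, `T \ S` need two boundary edges each, but `e` lies on
  -- neither corner of one of the pairs `(S ∩ T, S ∪ T)`, `(S \ T, T \ S)`
  rcases notMem_edgeBoundary_inter_union_or_sdiff heS heT with he | he
  · have := card_add_card_add_two_le edgeBoundary_inter_union_subset edgeBoundary_inter_inter_subset
      (mem_inter.2 ⟨heS, heT⟩) he
    rw [hI.card_edgeBoundary, hU.card_edgeBoundary] at this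
    omega
  by_contra! h
  obtain ⟨p, hpS, hpT⟩ := not_subset.1 h.1
  obtain ⟨q, hqT, hqS⟩ := not_subset.1 h.2
  have h₁ := two_le_card_edgeBoundary hdeg ((hS.reachable p hpS).symm.trans huv)
    (mem_sdiff.2 ⟨hpS, hpT⟩) fun h => hS.right_notMem (mem_sdiff.1 h).1
  have h₂ := two_le_card_edgeBoundary hdeg ((hT.reachable q hqT).symm.trans huv)
    (mem_sdiff.2 ⟨hqT, hqS⟩) fun h => hT.right_notMem (mem_sdiff.1 h).1
  have := card_add_card_add_two_le edgeBoundary_sdiff_union_subset edgeBoundary_sdiff_inter_subset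
    (mem_inter.2 ⟨heS, heT⟩) he
  omega

include hdeg huv in
theorem exists_mem_edgeBoundary_inter_union (hT : G.IsTwoCutSide u v T) (hC : G.IsTwoCutSide u v C)
    (hAT : A ⊆ T) (hAC : A ⊆ C) (hTB : T ⊆ B) (hCB : C ⊆ B)
    (heA : e ∈ G.edgeBoundary A) (heT : e ∈ G.edgeBoundary T) (heC : e ∉ G.edgeBoundary C)
    (hfB : f ∈ G.edgeBoundary B) (hfT : f ∈ G.edgeBoundary T) (hfC : f ∉ G.edgeBoundary C) :
    e ∈ G.edgeBoundary (T ∩ C) ∧ (∃ g ∈ G.edgeBoundary (T ∩ C), g ∈ G.edgeBoundary C) ∧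
      f ∈ G.edgeBoundary (T ∪ C) ∧ ∃ g ∈ G.edgeBoundary (T ∪ C), g ∈ G.edgeBoundary C := by
  obtain ⟨hI, hU⟩ := hT.inter_union hdeg huv hC
  have heI := mem_edgeBoundary_inter_of_subset (subset_inter hAT hAC) heA heT
  have hfU := mem_edgeBoundary_union_of_subset (union_subset hTB hCB) hfB hfT
  have hfI : f ∉ G.edgeBoundary (T ∩ C) := fun h =>
    hfC (mem_inter.1 (edgeBoundary_inter_inter_subset (mem_inter.2 ⟨h, hfU⟩))).2
  have heU : e ∉ G.edgeBoundary (T ∪ C) := fun h =>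
    heC (mem_inter.1 (edgeBoundary_inter_inter_subset (mem_inter.2 ⟨heI, h⟩))).2
  obtain ⟨g, hgI, hgT⟩ := hI.exists_mem_edgeBoundary_notMem hT hfT hfI
  obtain ⟨g', hgU, hgT'⟩ := hU.exists_mem_edgeBoundary_notMem hT heT heU
  have hgC :=
    (mem_union.1 (edgeBoundary_inter_union_subset (mem_union_left _ hgI))).resolve_left hgT
  have hgC' :=
    (mem_union.1 (edgeBoundary_inter_union_subset (mem_union_right _ hgU))).resolve_left hgT'
  exact ⟨heI, ⟨g, hgI, hgC⟩, hfU, ⟨g', hgU, hgC'⟩⟩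

include hdeg huv in
theorem mem_iff_reachable (hS : G.IsTwoCutSide u v S) {x : V} :
    x ∈ S ↔ (G.deleteEdges ↑(G.edgeBoundary S)).Reachable u x := by
  refine ⟨fun hxS => ?_, fun h => mem_of_reachable_deleteEdges_edgeBoundary h hS.left_mem⟩
  let P := univ.filter ((G.deleteEdges ↑(G.edgeBoundary S)).Reachable u)
  have hPS : P ⊆ S := fun y hy =>
    mem_of_reachable_deleteEdges_edgeBoundary (mem_filter.1 hy).2 hS.left_mem
  have huP : u ∈ P := mem_filter.2 ⟨mem_univ _, .refl u⟩
  have hbd : G.edgeBoundary P = G.edgeBoundary S := by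
    refine eq_of_subset_of_card_le (fun e he => mem_coe.1 (coe_edgeBoundary_subset
      (fun a b ha hab => mem_filter.2 ⟨mem_univ _, (mem_filter.1 ha).2.trans hab.reachable⟩)
      (mem_coe.2 he))) ?_
    rw [hS.card_edgeBoundary]
    exact two_le_card_edgeBoundary hdeg huv huP fun h => hS.right_notMem (hPS h)
  by_contra hxP
  replace hxP : x ∉ P := fun h => hxP (mem_filter.1 h).2
  obtain ⟨e, he⟩ := edgeBoundary_nonempty_of_reachable (hS.reachable x hxS).symm
    (mem_sdiff.2 ⟨hxS, hxP⟩) fun h => (mem_sdiff.1 h).2 huP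
  rcases mem_union.1 (edgeBoundary_sdiff_subset he) with h | h
  · exact notMem_edgeBoundary_sdiff hPS (hbd ▸ h) h he
  · exact notMem_edgeBoundary_sdiff hPS h (hbd ▸ h) he

include hdeg huv in
theorem eq_of_edgeBoundary_eq (hS : G.IsTwoCutSide u v S) (hT : G.IsTwoCutSide u v T)
    (h : G.edgeBoundary S = G.edgeBoundary T) : S = T := by
  ext x
  rw [hS.mem_iff_reachable hdeg huv, hT.mem_iff_reachable hdeg huv, h]

end IsTwoCutSide

section

variable (hdeg : ∀ x, Even (G.degree x)) (huv : G.Reachable u v)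

include hdeg huv in
theorem exists_isTwoCutSide_coe_edgeBoundary_eq {F : Set (Sym2 V)} (hF : F.ncard = 2)
    (hFuv : ¬(G.deleteEdges F).Reachable u v) :
    ∃ S, G.IsTwoCutSide u v S ∧ ↑(G.edgeBoundary S) = F := by
  let S := univ.filter ((G.deleteEdges F).Reachable u)
  have huS : u ∈ S := mem_filter.2 ⟨mem_univ _, .refl u⟩
  have hvS : v ∉ S := fun h => hFuv (mem_filter.1 h).2
  have hsub : ↑(G.edgeBoundary S) ⊆ F := coe_edgeBoundary_subset fun a b ha hab =>
    mem_filter.2 ⟨mem_univ _, (mem_filter.1 ha).2.trans hab.reachable⟩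
  have hcard : F.ncard ≤ (↑(G.edgeBoundary S) : Set (Sym2 V)).ncard := by
    rw [hF, Set.ncard_coe_finset]
    exact two_le_card_edgeBoundary hdeg huv huS hvS
  have hSF := Set.eq_of_subset_of_ncard_le hsub hcard
  refine ⟨S, ⟨huS, hvS, ?_, fun x hx => (mem_filter.1 hx).2.mono (deleteEdges_le F)⟩, hSF⟩
  rw [← Set.ncard_coe_finset, hSF, hF]

include huv in
theorem exists_forall_card_edgeBoundary_inter_eq_one :
    ∃ W : Finset (Sym2 V), ∀ S, G.IsTwoCutSide u v S → #(G.edgeBoundary S ∩ W) = 1 := by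
  obtain ⟨p⟩ := huv
  refine ⟨p.toPath.1.edges.toFinset, fun S hS => ?_⟩
  have hodd := p.toPath.2.isTrail.odd_card_edgeBoundary_inter hS.left_mem hS.right_notMem
  have := card_le_card
    (inter_subset_left (s₁ := G.edgeBoundary S) (s₂ := p.toPath.1.edges.toFinset))
  rw [hS.card_edgeBoundary] at this
  obtain ⟨k, hk⟩ := hodd
  omega

include hdeg huv in
theorem four_mul_card_filter_edgeBoundary_subset_le {W : Finset (Sym2 V)}
    (hW : ∀ S, G.IsTwoCutSide u v S → #(G.edgeBoundary S ∩ W) = 1) (E : Finset (Sym2 V)) :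
    4 * #{S ∈ G.twoCutSides u v | G.edgeBoundary S ⊆ E} ≤ #E ^ 2 := by
  have hinj : Set.InjOn G.edgeBoundary ↑{S ∈ G.twoCutSides u v | G.edgeBoundary S ⊆ E} :=
    fun S hS T hT h => (mem_twoCutSides.1 (mem_filter.1 hS).1).eq_of_edgeBoundary_eq hdeg huv
      (mem_twoCutSides.1 (mem_filter.1 hT).1) h
  -- the boundary of a side consists of one edge of `E ∩ W` and one of `E \ W`
  have hsub : {S ∈ G.twoCutSides u v | G.edgeBoundary S ⊆ E}.image G.edgeBoundary ⊆
      ((E ∩ W) ×ˢ (E \ W)).image fun p => {p.1, p.2} := by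
    simp only [subset_iff, mem_image, mem_filter, mem_twoCutSides]
    rintro _ ⟨S, ⟨hS, hSE⟩, rfl⟩
    obtain ⟨a, ha⟩ := card_eq_one.1 (hW S hS)
    obtain ⟨b, hb⟩ := card_eq_one.1 (show #(G.edgeBoundary S \ W) = 1 by
      have := card_inter_add_card_sdiff (G.edgeBoundary S) W
      rw [hS.card_edgeBoundary, hW S hS] at this
      omega)
    have hdecomp := sup_inf_sdiff (G.edgeBoundary S) W
    rw [inf_eq_inter, sup_eq_union, ha, hb, ← insert_eq] at hdecomp
    have haS : a ∈ G.edgeBoundary S ∩ W := ha ▸ mem_singleton_self a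
    have hbS : b ∈ G.edgeBoundary S \ W := hb ▸ mem_singleton_self b
    exact ⟨(a, b), mem_product.2 ⟨mem_inter.2 ⟨hSE (mem_inter.1 haS).1, (mem_inter.1 haS).2⟩,
      mem_sdiff.2 ⟨hSE (mem_sdiff.1 hbS).1, (mem_sdiff.1 hbS).2⟩⟩, hdecomp⟩
  have := (card_le_card hsub).trans card_image_le
  rw [card_image_of_injOn hinj, card_product] at this
  have hE := card_inter_add_card_sdiff E W
  nlinarith [sq_nonneg ((#(E ∩ W) : ℤ) - #(E \ W))]

end

/-! ### Maximal chains of sides -/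

structure IsMaxSideChain (G : SimpleGraph V) (u v : V) (c : ℕ → Finset V) (r : ℕ) : Prop where
  isTwoCutSide : ∀ i < r, G.IsTwoCutSide u v (c i)
  strictMonoOn : StrictMonoOn c (Set.Iio r)
  maximal : ∀ T, G.IsTwoCutSide u v T → (∀ i < r, T ⊆ c i ∨ c i ⊆ T) → ∃ i < r, c i = T

theorem exists_isMaxSideChain (G : SimpleGraph V) (u v : V) : ∃ c r, G.IsMaxSideChain u v c r := by
  set chains := univ.filter fun C : Finset (Finset V) =>
    IsChain (· ≤ ·) (C : Set (Finset V)) ∧ C ⊆ G.twoCutSides u v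
  obtain ⟨C, hC, hmax⟩ := chains.exists_max_image card ⟨∅, by simp [chains]⟩
  obtain ⟨-, hchain, hsides⟩ := mem_filter.1 hC
  obtain ⟨c, hc, hmem⟩ := C.exists_strictMonoOn_of_isChain hchain
  refine ⟨c, #C, fun i hi => mem_twoCutSides.1 (hsides ((hmem _).2 ⟨i, hi, rfl⟩)), hc,
    fun T hT hcomp => (hmem T).1 ?_⟩
  by_contra hTC
  have hins : insert T C ∈ chains := by
    refine mem_filter.2 ⟨mem_univ _, ?_, insert_subset (mem_twoCutSides.2 hT) hsides⟩
    rw [coe_insert]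
    refine hchain.insert fun b hb _ => ?_
    obtain ⟨i, hi, rfl⟩ := (hmem b).1 hb
    exact hcomp i hi
  have := hmax _ hins
  rw [card_insert_of_notMem hTC] at this
  omega

def SharesBoundaryEdge (G : SimpleGraph V) (c : ℕ → Finset V) (k : ℕ) : Prop :=
  (G.edgeBoundary (c k) ∩ G.edgeBoundary (c (k + 1))).Nonempty

/-- The index of the run of `c` containing `i`. -/
noncomputable def runIndex (G : SimpleGraph V) (c : ℕ → Finset V) : ℕ → ℕ :=
  Nat.count fun k => ¬G.SharesBoundaryEdge c k

theorem runIndex_mono {c : ℕ → Finset V} : Monotone (G.runIndex c) := Nat.count_monotone _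

theorem runIndex_succ (c : ℕ → Finset V) (k : ℕ) :
    G.runIndex c (k + 1) = G.runIndex c k + if G.SharesBoundaryEdge c k then 0 else 1 := by
  simp only [runIndex, Nat.count_succ]
  split_ifs <;> simp_all

theorem exists_runIndex_eq {c : ℕ → Finset V} {r q : ℕ} (hr : 0 < r)
    (hq : q ≤ G.runIndex c (r - 1)) : ∃ i < r, G.runIndex c i = q := by
  obtain ⟨i, hi, hiq⟩ := Nat.exists_count_eq hq
  exact ⟨i, by omega, hiq⟩

theorem sum_card_filter_runIndex_eq (c : ℕ → Finset V) (r : ℕ) :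
    ∑ q ∈ range (G.runIndex c (r - 1) + 1), #{i ∈ range r | G.runIndex c i = q} = r := by
  rw [← card_eq_sum_card_fiberwise fun i hi =>
    mem_range.2 (Nat.lt_succ_of_le (runIndex_mono (Nat.le_sub_one_of_lt (mem_range.1 hi)))),
    card_range]

namespace IsMaxSideChain

variable {c : ℕ → Finset V} {r i j k : ℕ}

theorem subset_of_le (hc : G.IsMaxSideChain u v c r) (hij : i ≤ j) (hj : j < r) : c i ⊆ c j :=
  hc.strictMonoOn.monotoneOn (Set.mem_Iio.2 (hij.trans_lt hj)) (Set.mem_Iio.2 hj) hij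

theorem subset_total (hc : G.IsMaxSideChain u v c r) (hi : i < r) (hj : j < r) :
    c i ⊆ c j ∨ c j ⊆ c i :=
  (le_total i j).imp (hc.subset_of_le · hj) (hc.subset_of_le · hi)

theorem mem_edgeBoundary_of_le_of_le (hc : G.IsMaxSideChain u v c r)
    (hi : e ∈ G.edgeBoundary (c i)) (hk : e ∈ G.edgeBoundary (c k)) (hij : i ≤ j) (hjk : j ≤ k)
    (hkr : k < r) : e ∈ G.edgeBoundary (c j) :=
  mem_edgeBoundary_of_subset_of_subset (hc.subset_of_le hij (hjk.trans_lt hkr))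
    (hc.subset_of_le hjk hkr) hi hk

theorem pos (hc : G.IsMaxSideChain u v c r) (hT : G.IsTwoCutSide u v T) : 0 < r := by
  by_contra! hr
  obtain ⟨i, hi, -⟩ := hc.maximal T hT fun i hi => by omega
  omega

theorem sdiff_nonempty (hc : G.IsMaxSideChain u v c r) (hk : k + 1 < r) :
    (c (k + 1) \ c k).Nonempty :=
  Finset.sdiff_nonempty.2 fun h => (hc.strictMonoOn (Set.mem_Iio.2 (by omega)) (Set.mem_Iio.2 hk)
    (lt_add_one k)).not_ge h

theorem card_eq_card_add_sum_card_sdiff (hc : G.IsMaxSideChain u v c r) {m : ℕ} (hm : m < r) :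
    #(c m) = #(c 0) + ∑ i ∈ range m, #(c (i + 1) \ c i) := by
  induction m with
  | zero => simp
  | succ m ih =>
    have := card_sdiff_add_card_eq_card (hc.subset_of_le (Nat.le_add_right m 1) hm)
    rw [sum_range_succ, ← add_assoc, ← ih (by omega)]
    omega

theorem card_biUnion_edgeBoundary_le (hc : G.IsMaxSideChain u v c r) {q : ℕ}
    (hq : q ≤ G.runIndex c (r - 1)) :
    #({i ∈ range r | G.runIndex c i = q}.biUnion (G.edgeBoundary ∘ c)) ≤
      #{i ∈ range r | G.runIndex c i = q} + 1 := by
  rcases Nat.eq_zero_or_pos r with rfl | hr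
  · simp
  set Q := {i ∈ range r | G.runIndex c i = q}
  have hmemQ : ∀ k, k ∈ Q ↔ k < r ∧ G.runIndex c k = q := by simp [Q]
  obtain ⟨i, hi, hiq⟩ := exists_runIndex_eq hr hq
  have hQ : Q.Nonempty := ⟨i, (hmemQ i).2 ⟨hi, hiq⟩⟩
  set a := Q.min' hQ
  set b := Q.max' hQ
  have ha := (hmemQ a).1 (Q.min'_mem hQ)
  have hb := (hmemQ b).1 (Q.max'_mem hQ)
  have hQI : Q = Icc a b := by
    ext k
    refine ⟨fun hk => mem_Icc.2 ⟨Q.min'_le k hk, Q.le_max' k hk⟩, fun hk => ?_⟩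
    have := runIndex_mono (G := G) (c := c) (mem_Icc.1 hk).1
    have := runIndex_mono (G := G) (c := c) (mem_Icc.1 hk).2
    exact (hmemQ k).2 ⟨by have := (mem_Icc.1 hk).2; omega, by omega⟩
  have hab : a ≤ b := Q.min'_le _ (Q.max'_mem hQ)
  have := card_biUnion_Icc_le (G.edgeBoundary ∘ c) hab
    (fun k hk => (hc.isTwoCutSide k (by have := (mem_Icc.1 hk).2; omega)).card_edgeBoundary.le)
    fun k hk => by
      rw [mem_Ico] at hk
      have h₁ := (hmemQ k).1 (hQI ▸ mem_Icc.2 ⟨hk.1, hk.2.le⟩)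
      have h₂ := (hmemQ (k + 1)).1 (hQI ▸ mem_Icc.2 ⟨by omega, hk.2⟩)
      have := runIndex_succ (G := G) (c := c) k
      by_contra h
      rw [if_neg (show ¬G.SharesBoundaryEdge c k from h)] at this
      omega
  rw [hQI, Nat.card_Icc]
  omega

section

variable (hdeg : ∀ x, Even (G.degree x)) (huv : G.Reachable u v)

include hdeg huv in
theorem exists_mem_edgeBoundary (hc : G.IsMaxSideChain u v c r) (hT : G.IsTwoCutSide u v T)
    (he : e ∈ G.edgeBoundary T) : ∃ i < r, e ∈ G.edgeBoundary (c i) := by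
  -- uncrossing `T` with a member of the chain crossing it keeps `e` on the boundary and
  -- decreases the number of crossing members
  induction hm : #{i ∈ range r | ¬(T ⊆ c i ∨ c i ⊆ T)}
    using Nat.strong_induction_on generalizing T with
  | _ m ih =>
  by_cases hcomp : ∀ i < r, T ⊆ c i ∨ c i ⊆ T
  · obtain ⟨i, hi, rfl⟩ := hc.maximal T hT hcomp
    exact ⟨i, hi, he⟩
  obtain ⟨k, hk, hkT⟩ := not_forall₂.1 hcomp
  by_cases hek : e ∈ G.edgeBoundary (c k)
  · exact ⟨k, hk, hek⟩
  obtain ⟨hI, hU⟩ := hT.inter_union hdeg huv (hc.isTwoCutSide k hk)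
  rcases mem_edgeBoundary_inter_or_union he hek with h | h
  · exact ih _ (hm ▸ card_filter_incomparable_lt hk hkT
      (fun i hi hTi => inter_subset_or_subset_inter hTi (hc.subset_total hk hi))
      (Or.inl inter_subset_right)) hI h rfl
  · exact ih _ (hm ▸ card_filter_incomparable_lt hk hkT
      (fun i hi hTi => union_subset_or_subset_union hTi (hc.subset_total hk hi))
      (Or.inr subset_union_right)) hU h rfl

include hdeg huv in
theorem subset_and_subset_and_add_one_lt (hc : G.IsMaxSideChain u v c r)
    (hT : G.IsTwoCutSide u v T) (he : e ∈ G.edgeBoundary T) (hf : f ∈ G.edgeBoundary T)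
    (hei : e ∈ G.edgeBoundary (c i)) (hfj : f ∈ G.edgeBoundary (c j)) (hij : i < j) (hj : j < r)
    (he₁ : e ∉ G.edgeBoundary (c (i + 1))) (hf₁ : f ∉ G.edgeBoundary (c (j - 1))) :
    c i ⊆ T ∧ T ⊆ c j ∧ i + 1 < j := by
  have hiT : c i ⊆ T :=
    ((hc.isTwoCutSide i (by omega)).subset_or_subset hdeg huv hT hei he).resolve_right fun hTi =>
      hf₁ (mem_edgeBoundary_of_subset_of_subset
        (hTi.trans (hc.subset_of_le (by omega) (by omega))) (hc.subset_of_le (by omega) hj) hf hfj)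
  have hTj : T ⊆ c j :=
    (hT.subset_or_subset hdeg huv (hc.isTwoCutSide j hj) hf hfj).resolve_right fun hjT =>
      he₁ (mem_edgeBoundary_of_subset_of_subset (hc.subset_of_le (by omega) (by omega))
        ((hc.subset_of_le (by omega) hj).trans hjT) hei he)
  refine ⟨hiT, hTj, ?_⟩
  by_contra! h
  obtain ⟨m, hm, rfl⟩ := hc.maximal T hT fun k hk => by
    by_cases hki : k ≤ i
    · exact Or.inr ((hc.subset_of_le hki (by omega)).trans hiT)
    · exact Or.inl (hTj.trans (hc.subset_of_le (by omega) hk))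
  rcases le_or_gt m i with hmi | hmi
  · exact hf₁ (hc.mem_edgeBoundary_of_le_of_le hf hfj (by omega) (by omega) hj)
  · exact he₁ (hc.mem_edgeBoundary_of_le_of_le hei he (by omega) hmi hm)

include hdeg huv in
theorem sharesBoundaryEdge (hc : G.IsMaxSideChain u v c r) (hT : G.IsTwoCutSide u v T)
    (he : e ∈ G.edgeBoundary T) (hf : f ∈ G.edgeBoundary T) (hei : e ∈ G.edgeBoundary (c i))
    (hfj : f ∈ G.edgeBoundary (c j)) (hj : j < r) (hik : i ≤ k) (hkj : k < j) :
    G.SharesBoundaryEdge c k := by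
  induction hd : j - i using Nat.strong_induction_on generalizing T e f i j with
  | _ d ih =>
  by_cases he₁ : e ∈ G.edgeBoundary (c (i + 1))
  · rcases hik.eq_or_lt with rfl | hik
    · exact ⟨e, mem_inter.2 ⟨hei, he₁⟩⟩
    · exact ih _ (by omega) hT he hf he₁ hfj hj hik hkj rfl
  by_cases hf₁ : f ∈ G.edgeBoundary (c (j - 1))
  · rcases (Nat.le_sub_one_of_lt hkj).eq_or_lt with rfl | hkj'
    · exact ⟨f, mem_inter.2 ⟨hf₁, by rwa [Nat.sub_add_cancel (by omega)]⟩⟩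
    · exact ih _ (by omega) hT he hf hei hf₁ (by omega) hik hkj' rfl
  obtain ⟨hiT, hTj, hij⟩ :=
    hc.subset_and_subset_and_add_one_lt hdeg huv hT he hf hei hfj (by omega) hj he₁ hf₁
  have hl : i + 1 < r := by omega
  have hfl : f ∉ G.edgeBoundary (c (i + 1)) := fun h =>
    hf₁ (hc.mem_edgeBoundary_of_le_of_le h hfj (by omega) (by omega) hj)
  -- uncrossing `T` with `c (i + 1)` replaces the pair `e, f` by a pair `e, g` bounding
  -- `T ∩ c (i + 1)` and a pair `g', f` bounding `T ∪ c (i + 1)`, with `g, g'` on `c (i + 1)`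
  obtain ⟨heI, ⟨g, hgI, hgl⟩, hfU, ⟨g', hgU, hgl'⟩⟩ :=
    hT.exists_mem_edgeBoundary_inter_union hdeg huv (hc.isTwoCutSide _ hl) hiT
      (hc.subset_of_le (by omega) hl) hTj (hc.subset_of_le hij.le hj) hei he he₁ hfj hf hfl
  obtain ⟨hI, hU⟩ := hT.inter_union hdeg huv (hc.isTwoCutSide _ hl)
  rcases hik.eq_or_lt with rfl | hik
  · exact ih 1 (by omega) hI heI hgI hei hgl hl le_rfl (by omega) (by omega)
  · exact ih (j - (i + 1)) (by omega) hU hgU hfU hgl' hfj hj hik hkj rfl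

include hdeg huv in
theorem runIndex_eq (hc : G.IsMaxSideChain u v c r) (hT : G.IsTwoCutSide u v T)
    (he : e ∈ G.edgeBoundary T) (hf : f ∈ G.edgeBoundary T) (hei : e ∈ G.edgeBoundary (c i))
    (hfj : f ∈ G.edgeBoundary (c j)) (hi : i < r) (hj : j < r) :
    G.runIndex c i = G.runIndex c j := by
  rcases le_total i j with hij | hji
  · exact Nat.count_eq_count_of_forall_not hij fun k hik hkj =>
      not_not.2 (hc.sharesBoundaryEdge hdeg huv hT he hf hei hfj hj hik hkj)
  · exact (Nat.count_eq_count_of_forall_not hji fun k hjk hki =>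
      not_not.2 (hc.sharesBoundaryEdge hdeg huv hT hf he hfj hei hi hjk hki)).symm

include hdeg huv in
theorem twoCutSides_subset_biUnion (hc : G.IsMaxSideChain u v c r) :
    G.twoCutSides u v ⊆ (range (G.runIndex c (r - 1) + 1)).biUnion fun q =>
      {T ∈ G.twoCutSides u v |
        G.edgeBoundary T ⊆ {i ∈ range r | G.runIndex c i = q}.biUnion (G.edgeBoundary ∘ c)} := by
  intro T hT
  have hT' := mem_twoCutSides.1 hT
  obtain ⟨e, he⟩ := card_pos.1 (hT'.card_edgeBoundary ▸ two_pos)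
  obtain ⟨i, hi, hei⟩ := hc.exists_mem_edgeBoundary hdeg huv hT' he
  refine mem_biUnion.2 ⟨G.runIndex c i, ?_, mem_filter.2 ⟨hT, fun f hf => ?_⟩⟩
  · exact mem_range.2 (Nat.lt_succ_of_le (runIndex_mono (by omega)))
  obtain ⟨j, hj, hfj⟩ := hc.exists_mem_edgeBoundary hdeg huv hT' hf
  exact mem_biUnion.2 ⟨j, mem_filter.2 ⟨mem_range.2 hj,
    hc.runIndex_eq hdeg huv hT' hf he hfj hei hj hi⟩, hfj⟩

include hdeg huv in
theorem four_mul_card_twoCutSides_le (hc : G.IsMaxSideChain u v c r) :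
    4 * #(G.twoCutSides u v) ≤ (r + 1 - G.runIndex c (r - 1)) ^ 2 + 4 * G.runIndex c (r - 1) := by
  obtain h | ⟨T, hT⟩ := (G.twoCutSides u v).eq_empty_or_nonempty
  · simp [h]
  have hr := hc.pos (mem_twoCutSides.1 hT)
  obtain ⟨W, hW⟩ := exists_forall_card_edgeBoundary_inter_eq_one huv
  set s := G.runIndex c (r - 1)
  set Q : ℕ → Finset ℕ := fun q => {i ∈ range r | G.runIndex c i = q}
  have hQ : ∀ q ∈ range (s + 1), 1 ≤ #(Q q) := fun q hq => by
    obtain ⟨i, hi, hiq⟩ := exists_runIndex_eq hr (Nat.le_of_lt_succ (mem_range.1 hq))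
    exact card_pos.2 ⟨i, mem_filter.2 ⟨mem_range.2 hi, hiq⟩⟩
  have hsum : ∑ q ∈ range (s + 1), (#(Q q) - 1) + (s + 1) = r := by
    have := sum_congr rfl fun q hq => Nat.sub_add_cancel (hQ q hq)
    rwa [sum_add_distrib, sum_const, card_range, smul_eq_mul, mul_one,
      sum_card_filter_runIndex_eq] at this
  calc 4 * #(G.twoCutSides u v)
      ≤ ∑ q ∈ range (s + 1),
          4 * #{T ∈ G.twoCutSides u v | G.edgeBoundary T ⊆ (Q q).biUnion (G.edgeBoundary ∘ c)} := by
        rw [← mul_sum]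
        exact Nat.mul_le_mul_left 4 ((card_le_card (hc.twoCutSides_subset_biUnion hdeg huv)).trans
          card_biUnion_le)
    _ ≤ ∑ q ∈ range (s + 1), ((#(Q q) - 1) + 2) ^ 2 := sum_le_sum fun q hq => by
        refine (four_mul_card_filter_edgeBoundary_subset_le hdeg huv hW _).trans
          (Nat.pow_le_pow_left ?_ 2)
        have : #((Q q).biUnion (G.edgeBoundary ∘ c)) ≤ #(Q q) + 1 :=
          hc.card_biUnion_edgeBoundary_le (Nat.le_of_lt_succ (mem_range.1 hq))
        have := hQ q hq
        omega
    _ ≤ (r + 1 - s) ^ 2 + 4 * s := by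
        have := sum_add_two_sq_add_four_le (fun q => #(Q q) - 1) (s + 1)
        rw [show r + 1 - s = ∑ q ∈ range (s + 1), (#(Q q) - 1) + 2 by omega]
        omega

end

/-! ### Counting vertices along the chain -/

theorem five_le_card_sdiff (hc : G.IsMaxSideChain u v c r) (hreg : G.IsRegularOfDegree 4)
    (hk : k + 1 < r) (h : G.SharesBoundaryEdge c k) : 5 ≤ #(c (k + 1) \ c k) := by
  obtain ⟨g, hg⟩ := h
  refine five_le_card_of_card_edgeBoundary_le_three hreg (hc.sdiff_nonempty hk) ?_
  have hsub := subset_erase.2 ⟨edgeBoundary_sdiff_subset,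
    notMem_edgeBoundary_sdiff (hc.subset_of_le (Nat.le_add_right k 1) hk) (mem_inter.1 hg).1
      (mem_inter.1 hg).2⟩
  have := (card_le_card hsub).trans_eq (card_erase_of_mem (mem_union_right _ (mem_inter.1 hg).1))
  have := card_union_le (G.edgeBoundary (c (k + 1))) (G.edgeBoundary (c k))
  rw [(hc.isTwoCutSide _ hk).card_edgeBoundary, (hc.isTwoCutSide k (by omega)).card_edgeBoundary]
    at this
  omega

theorem card_sdiff_eq_one_or_four_le (hc : G.IsMaxSideChain u v c r)
    (hreg : G.IsRegularOfDegree 4) (hk : k + 1 < r) :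
    #(c (k + 1) \ c k) = 1 ∨ 4 ≤ #(c (k + 1) \ c k) := by
  refine card_eq_one_or_four_le_of_card_edgeBoundary_le_four hreg (hc.sdiff_nonempty hk) ?_
  have := (card_le_card (G.edgeBoundary_sdiff_subset (S := c (k + 1)) (T := c k))).trans
    (card_union_le _ _)
  rwa [(hc.isTwoCutSide _ hk).card_edgeBoundary, (hc.isTwoCutSide k (by omega)).card_edgeBoundary]
    at this

theorem two_le_card_sdiff (hc : G.IsMaxSideChain u v c r) (hk : k + 2 < r)
    (h₀ : ¬G.SharesBoundaryEdge c k) (h₁ : ¬G.SharesBoundaryEdge c (k + 1))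
    (hone : #(c (k + 1) \ c k) = 1) : 2 ≤ #(c (k + 1 + 1) \ c (k + 1)) := by
  obtain ⟨x, hx⟩ := card_eq_one.1 hone
  have := card_edgeBoundary_le_card_sdiff (hc.subset_of_le (Nat.le_add_right k 1) (by omega))
    (hc.subset_of_le (Nat.le_add_right (k + 1) 1) hk) hx h₀ h₁
  rwa [(hc.isTwoCutSide _ (by omega)).card_edgeBoundary] at this

theorem ten_add_sum_card_sdiff_le (hc : G.IsMaxSideChain u v c r) (hreg : G.IsRegularOfDegree 4)
    (hr : 0 < r) : 10 + ∑ i ∈ range (r - 1), #(c (i + 1) \ c i) ≤ Fintype.card V := by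
  have hfirst := hc.isTwoCutSide 0 hr
  have hlast := hc.isTwoCutSide (r - 1) (by omega)
  have h₀ := five_le_card_of_card_edgeBoundary_le_three hreg ⟨u, hfirst.left_mem⟩
    (by rw [hfirst.card_edgeBoundary]; norm_num)
  have h₁ := five_le_card_of_card_edgeBoundary_le_three hreg (S := (c (r - 1))ᶜ)
    ⟨v, mem_compl.2 hlast.right_notMem⟩
    (by rw [edgeBoundary_compl, hlast.card_edgeBoundary]; norm_num)
  have := hc.card_eq_card_add_sum_card_sdiff (m := r - 1) (by omega)
  have := card_add_card_compl (c (r - 1))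
  omega

theorem weighted_card_le_sum_card_sdiff (hc : G.IsMaxSideChain u v c r)
    (hreg : G.IsRegularOfDegree 4) :
    5 * #{k ∈ range (r - 1) | G.SharesBoundaryEdge c k} +
        #{k ∈ range (r - 1) | ¬G.SharesBoundaryEdge c k ∧ #(c (k + 1) \ c k) = 1} +
        4 * #{k ∈ range (r - 1) | ¬G.SharesBoundaryEdge c k ∧ #(c (k + 1) \ c k) ≠ 1} ≤
      ∑ k ∈ range (r - 1), #(c (k + 1) \ c k) := by
  simp only [card_filter, mul_sum, ← sum_add_distrib]
  refine sum_le_sum fun k hk => ?_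
  have hk : k + 1 < r := by have := mem_range.1 hk; omega
  by_cases h : G.SharesBoundaryEdge c k
  · simp [h, hc.five_le_card_sdiff hreg hk h]
  · rcases hc.card_sdiff_eq_one_or_four_le hreg hk with h₁ | h₄
    · simp [h, h₁]
    · simp [h, h₄, show #(c (k + 1) \ c k) ≠ 1 by omega]

theorem two_mul_card_filter_le (hc : G.IsMaxSideChain u v c r) :
    2 * #{k ∈ range (r - 1) | ¬G.SharesBoundaryEdge c k ∧ #(c (k + 1) \ c k) = 1} ≤ r := by
  have := two_mul_card_le_of_forall_add_one_notMem
    (P := {k ∈ range (r - 1) | ¬G.SharesBoundaryEdge c k ∧ #(c (k + 1) \ c k) = 1})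
    (filter_subset _ _) fun k hk hk₁ => by
    simp only [mem_filter, mem_range] at hk hk₁
    have := hc.two_le_card_sdiff (by omega) hk.2.1 hk₁.2.1 hk.2.2
    omega
  omega

end IsMaxSideChain

theorem sixty_mul_card_twoCutSides_le (hreg : G.IsRegularOfDegree 4) (huv : G.Reachable u v) :
    60 * #(G.twoCutSides u v) ≤ Fintype.card V ^ 2 := by
  have hdeg : ∀ x, Even (G.degree x) := fun x => hreg x ▸ even_two_mul 2
  obtain ⟨c, r, hc⟩ := G.exists_isMaxSideChain u v
  obtain h | ⟨T, hT⟩ := (G.twoCutSides u v).eq_empty_or_nonempty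
  · simp [h]
  have hr := hc.pos (mem_twoCutSides.1 hT)
  have hcount := hc.four_mul_card_twoCutSides_le hdeg huv
  have hbudget := (Nat.add_le_add_left (hc.weighted_card_le_sum_card_sdiff hreg) 10).trans
    (hc.ten_add_sum_card_sdiff_le hreg hr)
  have hiso := hc.two_mul_card_filter_le
  have hL := card_filter_add_card_filter_not (s := range (r - 1)) (G.SharesBoundaryEdge c)
  have hB := card_filter_add_card_filter_not (s := {k ∈ range (r - 1) | ¬G.SharesBoundaryEdge c k})
    fun k => #(c (k + 1) \ c k) = 1
  rw [runIndex, Nat.count_eq_card_filter_range] at hcount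
  simp only [filter_filter, card_range, ← ne_eq] at hL hB
  set L := #{k ∈ range (r - 1) | G.SharesBoundaryEdge c k}
  set B := #{k ∈ range (r - 1) | ¬G.SharesBoundaryEdge c k}
  set B₁ := #{k ∈ range (r - 1) | ¬G.SharesBoundaryEdge c k ∧ #(c (k + 1) \ c k) = 1}
  set B₄ := #{k ∈ range (r - 1) | ¬G.SharesBoundaryEdge c k ∧ #(c (k + 1) \ c k) ≠ 1}
  rw [show r + 1 - B = L + 2 by omega, ← hB] at hcount
  exact Nat.sixty_mul_le_sq hcount (by omega) (by omega)

theorem ncard_setOf_not_reachable_deleteEdges_le (hdeg : ∀ x, Even (G.degree x))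
    (huv : G.Reachable u v) :
    {F : Set (Sym2 V) | F ⊆ G.edgeSet ∧ F.ncard = 2 ∧ ¬(G.deleteEdges F).Reachable u v}.ncard ≤
      #(G.twoCutSides u v) := by
  have hsub : {F : Set (Sym2 V) | F ⊆ G.edgeSet ∧ F.ncard = 2 ∧
      ¬(G.deleteEdges F).Reachable u v} ⊆
      (fun S => (G.edgeBoundary S : Set (Sym2 V))) '' ↑(G.twoCutSides u v) := by
    rintro F ⟨-, hF, hFuv⟩
    obtain ⟨S, hS, rfl⟩ := exists_isTwoCutSide_coe_edgeBoundary_eq hdeg huv hF hFuv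
    exact ⟨S, mem_twoCutSides.2 hS, rfl⟩
  have := (Set.ncard_le_ncard hsub (Set.toFinite _)).trans (Set.ncard_image_le (Set.toFinite _))
  rwa [Set.ncard_coe_finset] at this

end SimpleGraph

theorem two_edge_cuts_bound_four_regular_general (n : ℕ)
    (G : SimpleGraph (Fin n)) (hreg : G.IsRegularOfDegree 4)
    (u v : Fin n) (hreach : G.Reachable u v) :
    (Set.ncard {F : Set (Sym2 (Fin n)) | F ⊆ G.edgeSet ∧ F.ncard = 2 ∧
        ¬ (G.deleteEdges F).Reachable u v} : ℝ) ≤ (n : ℝ) ^ 2 / 60 := by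
  have hcuts := G.ncard_setOf_not_reachable_deleteEdges_le (fun x => hreg x ▸ even_two_mul 2) hreach
  have hsides := G.sixty_mul_card_twoCutSides_le hreg hreach
  rw [Fintype.card_fin] at hsides
  rw [le_div_iff₀ (by norm_num)]
  exact_mod_cast (by omega : _ * 60 ≤ n ^ 2)

/-- Let `G` be a `4`-regular simple graph on `n ≥ 8` vertices, and let
`u ≠ v` be vertices in the same connected component.  Then the number of 2-edge-cuts of
`G` separating `u` and `v` is at most `n² / 60`. -/
theorem two_edge_cuts_bound_four_regular (n : ℕ) (h8 : 8 ≤ n)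
    (G : SimpleGraph (Fin n)) (hreg : G.IsRegularOfDegree 4)
    (u v : Fin n) (huv : u ≠ v) (hreach : G.Reachable u v) :
    (Set.ncard {F : Set (Sym2 (Fin n)) | F ⊆ G.edgeSet ∧ F.ncard = 2 ∧
        ¬ (G.deleteEdges F).Reachable u v} : ℝ) ≤ (n : ℝ) ^ 2 / 60 :=
  two_edge_cuts_bound_four_regular_general n G hreg u v hreach
end

section
/- Let r ≥ 2 and n ≥ max{8, 2r+1}, let Ω_S be the set of all 2r-regular simple graphs on vertex set {1,…,n} and Ω_F the subset of connected such graphs, and let h : Ω_S → Ω_F be the chaining map. Then h(G_S) is connected and 2r-regular for every G_S ∈ Ω_S, and h is a surjection onto Ω_F. -/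
/-!
Every vertex of a `2r`-regular graph has even degree, so no edge is a bridge: if deleting `uv`
separated `u` from `v`, the component of `u` in the remaining graph would contain exactly one
vertex of odd degree, namely `u`, contradicting the handshake lemma. Hence deleting the bridge
edges `e_i` keeps every `H_i` connected, and the chain edges `v_i' v_{i+1}` link consecutive
components (in the cyclic order of the `v_i`) into one connected graph. With at least two
components, the bridge edges and the chain edges both cover each `v_i` and each `v_i'` exactly
once, and the chain edges join distinct components, so every vertex loses exactly as many
neighbours as it gains. A connected graph has a single component, whose bridge edge is deleted
and added back, so `h` fixes `Ω_F` pointwise.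
-/

open scoped Classical

noncomputable section

/-- The entry vertex of a connected component: its highest-labelled vertex. -/
def entry {n : ℕ} (G : SimpleGraph (Fin n)) (C : G.ConnectedComponent) : Fin n :=
  (Set.toFinite C.supp).toFinset.max' (by
    obtain ⟨w, hw⟩ := C.exists_rep
    exact ⟨w, by
      simp only [Set.Finite.mem_toFinset, SimpleGraph.ConnectedComponent.mem_supp_iff]
      exact hw⟩)

/-- The exit vertex of a connected component: the highest-labelled neighbour of its
entry vertex. -/
def exitV {n : ℕ} (G : SimpleGraph (Fin n)) (C : G.ConnectedComponent) : Fin n :=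
  ((Set.toFinite (G.neighborSet (entry G C))).toFinset.max).getD (entry G C)

/-- The cyclic successor of a component in the ordering of components by entry vertex:
the component with least entry vertex among those with a larger entry vertex, wrapping
around to the component with the overall least entry vertex. -/
def nextComp {n : ℕ} (G : SimpleGraph (Fin n)) (C : G.ConnectedComponent) :
    G.ConnectedComponent :=
  letI : Fintype G.ConnectedComponent := Fintype.ofFinite _
  let bigger : Finset G.ConnectedComponent :=
    Finset.univ.filter fun D => entry G C < entry G D
  if hb : bigger.Nonempty then
    G.connectedComponentMk ((bigger.image (entry G)).min' (hb.image _))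
  else
    G.connectedComponentMk
      (((Finset.univ : Finset G.ConnectedComponent).image (entry G)).min'
        (by
          have : (Finset.univ : Finset G.ConnectedComponent).Nonempty :=
            ⟨C, Finset.mem_univ C⟩
          exact this.image _))

/-- The chaining map `h`: delete the bridge edge (entry–exit) of every component, and
add the chain edges from the exit vertex of each component to the entry vertex of the
next component in the cyclic order of components by entry vertex.  (For a connected
graph this returns the graph itself.) -/
def chainMap {n : ℕ} (G : SimpleGraph (Fin n)) : SimpleGraph (Fin n) :=
  (G.deleteEdges {e | ∃ C : G.ConnectedComponent, e = s(entry G C, exitV G C)}) ⊔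
    SimpleGraph.fromEdgeSet
      {e | ∃ C : G.ConnectedComponent, e = s(exitV G C, entry G (nextComp G C))}

open SimpleGraph Finset

namespace SimpleGraph

lemma Reachable.of_forall_adj_reachable {V : Type*} {G H : SimpleGraph V}
    (hGH : ∀ u v, G.Adj u v → H.Reachable u v) {u v : V} (h : G.Reachable u v) :
    H.Reachable u v := by
  obtain ⟨w⟩ := h
  induction w with
  | nil => rfl
  | cons hadj _ ih => exact (hGH _ _ hadj).trans ih

variable {V : Type*} [Fintype V]

theorem degree_add_card_filter_mem_of_edgeSet_eq [DecidableEq V] {G H : SimpleGraph V}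
    [DecidableRel G.Adj] [DecidableRel H.Adj] (s t : Finset (Sym2 V)) (hs : ↑s ⊆ G.edgeSet)
    (ht : Disjoint (↑t) G.edgeSet) (hH : H.edgeSet = G.edgeSet \ ↑s ∪ ↑t) (v : V) :
    H.degree v + #{e ∈ s | v ∈ e} = G.degree v + #{e ∈ t | v ∈ e} := by
  have hHfin : H.edgeFinset = G.edgeFinset \ s ∪ t := by
    rw [← coe_inj]; push_cast; exact hH
  have hdisj : Disjoint (G.edgeFinset \ s) t := by
    rw [← disjoint_coe]; push_cast
    exact (ht.mono_right Set.sdiff_subset).symm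
  have hsub : {e ∈ s | v ∈ e} ⊆ {e ∈ G.edgeFinset | v ∈ e} :=
    monotone_filter_left _ fun e he => mem_edgeFinset.2 (hs he)
  have hsdiff : {e ∈ G.edgeFinset \ s | v ∈ e} =
      {e ∈ G.edgeFinset | v ∈ e} \ {e ∈ s | v ∈ e} := by
    ext; simp only [mem_filter, mem_sdiff]; tauto
  rw [← card_incidenceFinset_eq_degree, ← card_incidenceFinset_eq_degree,
    incidenceFinset_eq_filter, incidenceFinset_eq_filter, hHfin, filter_union,
    card_union_of_disjoint (disjoint_filter_filter hdisj), hsdiff,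
    ← card_sdiff_add_card_eq_card hsub]
  ring

theorem degree_spanningCoe_toSimpleGraph [DecidableEq V] {G : SimpleGraph V}
    [DecidableRel G.Adj] (C : G.ConnectedComponent) (v : V) :
    C.toSimpleGraph.spanningCoe.degree v = if v ∈ C.supp then G.degree v else 0 := by
  have hN : C.toSimpleGraph.spanningCoe.neighborFinset v =
      if v ∈ C.supp then G.neighborFinset v else ∅ := by
    ext w
    rw [mem_neighborFinset, ConnectedComponent.adj_spanningCoe_toSimpleGraph]
    split_ifs with hv <;> simp [hv]
  rw [← card_neighborFinset_eq_degree, hN]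
  split_ifs <;> simp

theorem not_isBridge_of_forall_even_degree {G : SimpleGraph V} [DecidableRel G.Adj]
    (heven : ∀ v, Even (G.degree v)) {a b : V} (hab : G.Adj a b) : ¬G.IsBridge s(a, b) := by
  rw [isBridge_iff, not_not]
  set G' := G.deleteEdges {s(a, b)}
  have hdeg (v : V) : G'.degree v + (if v = a ∨ v = b then 1 else 0) = G.degree v := by
    simpa [filter_singleton, apply_ite card] using
      degree_add_card_filter_mem_of_edgeSet_eq (H := G') {s(a, b)} ∅ (by simpa using hab)
        (by simp) (by simp [G', edgeSet_deleteEdges]) v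
  set C := G'.connectedComponentMk a
  have hodd : Odd (C.toSimpleGraph.spanningCoe.degree a) := by
    rw [degree_spanningCoe_toSimpleGraph, if_pos ((C.mem_supp_iff a).2 rfl)]
    have := hdeg a
    rw [if_pos (Or.inl rfl)] at this
    exact Nat.not_even_iff_odd.1 (Nat.even_add_one.1 (this ▸ heven a))
  obtain ⟨w, hwa, hw⟩ := exists_ne_odd_degree_of_exists_odd_degree _ a hodd
  rw [degree_spanningCoe_toSimpleGraph] at hw
  split_ifs at hw with hwC
  · have hwb : w = b := by
      by_contra hwb
      have := hdeg w
      rw [if_neg (by tauto), add_zero] at this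
      exact Nat.not_odd_iff_even.2 (this ▸ heven w) hw
    subst hwb
    exact ConnectedComponent.exact ((ConnectedComponent.mem_supp_iff _ _).1 hwC).symm
  · simp at hw

end SimpleGraph

def bridgeEdge {n : ℕ} (G : SimpleGraph (Fin n)) (C : G.ConnectedComponent) : Sym2 (Fin n) :=
  s(entry G C, exitV G C)

def chainEdge {n : ℕ} (G : SimpleGraph (Fin n)) (C : G.ConnectedComponent) : Sym2 (Fin n) :=
  s(exitV G C, entry G (nextComp G C))

section

variable {n : ℕ} {G : SimpleGraph (Fin n)}

@[simp]
lemma connectedComponentMk_entry (C : G.ConnectedComponent) :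
    G.connectedComponentMk (entry G C) = C := by
  have := Finset.max'_mem (Set.toFinite C.supp).toFinset
    (C.nonempty_supp.mono fun _ => (Set.toFinite C.supp).mem_toFinset.2)
  rwa [Set.Finite.mem_toFinset, ConnectedComponent.mem_supp_iff] at this

lemma entry_injective : Function.Injective (entry G) := fun C D h => by
  rw [← connectedComponentMk_entry C, h, connectedComponentMk_entry]

lemma adj_entry_exitV {C : G.ConnectedComponent} (hC : ¬G.IsIsolated (entry G C)) :
    G.Adj (entry G C) (exitV G C) := by
  have hne : (Set.toFinite (G.neighborSet (entry G C))).toFinset.Nonempty := by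
    simpa using hC
  rw [exitV, ← Finset.coe_max' hne]
  exact (Set.Finite.mem_toFinset _).1 (Finset.max'_mem _ hne)

lemma exitV_eq_or_adj (C : G.ConnectedComponent) :
    exitV G C = entry G C ∨ G.Adj (entry G C) (exitV G C) := by
  by_cases hC : G.IsIsolated (entry G C)
  · left
    have : (Set.toFinite (G.neighborSet (entry G C))).toFinset = ∅ := by
      simpa using hC
    rw [exitV, this, Finset.max_empty]
    rfl
  · exact Or.inr (adj_entry_exitV hC)

@[simp]
lemma connectedComponentMk_exitV (C : G.ConnectedComponent) :
    G.connectedComponentMk (exitV G C) = C := by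
  rcases exitV_eq_or_adj C with h | h
  · rw [h, connectedComponentMk_entry]
  · rw [← ConnectedComponent.connectedComponentMk_eq_of_adj h, connectedComponentMk_entry]

lemma exitV_ne_entry {C : G.ConnectedComponent} (hC : ¬G.IsIsolated (entry G C)) :
    exitV G C ≠ entry G C :=
  (adj_entry_exitV hC).ne'

lemma entry_nextComp_of_exists_lt {C : G.ConnectedComponent}
    (hC : ∃ D, entry G C < entry G D) :
    entry G C < entry G (nextComp G C) ∧
      ∀ D, entry G C < entry G D → entry G (nextComp G C) ≤ entry G D := by
  let _ : Fintype G.ConnectedComponent := Fintype.ofFinite _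
  have hbig : (Finset.univ.filter fun D => entry G C < entry G D).Nonempty := by
    obtain ⟨D, hD⟩ := hC
    exact ⟨D, by simpa using hD⟩
  rw [nextComp, dif_pos hbig]
  obtain ⟨D, hD, hDmin⟩ := Finset.mem_image.1 (Finset.min'_mem _ (hbig.image (entry G)))
  rw [← hDmin, connectedComponentMk_entry]
  refine ⟨(Finset.mem_filter.1 hD).2, fun E hE => hDmin ▸ Finset.min'_le _ _ ?_⟩
  exact Finset.mem_image_of_mem _ (by simpa using hE)

lemma entry_nextComp_le_of_forall_le {C : G.ConnectedComponent}
    (hC : ∀ D, entry G D ≤ entry G C) (D : G.ConnectedComponent) :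
    entry G (nextComp G C) ≤ entry G D := by
  let _ : Fintype G.ConnectedComponent := Fintype.ofFinite _
  have hbig : ¬(Finset.univ.filter fun D => entry G C < entry G D).Nonempty := by
    rintro ⟨D, hD⟩
    exact (hC D).not_gt (by simpa using hD)
  rw [nextComp, dif_neg hbig]
  obtain ⟨E, -, hEmin⟩ := Finset.mem_image.1 (Finset.min'_mem _
    ((Finset.univ_nonempty_iff.2 ⟨C⟩).image (entry G)))
  rw [← hEmin, connectedComponentMk_entry, hEmin]
  exact Finset.min'_le _ _ (Finset.mem_image_of_mem _ (Finset.mem_univ D))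

lemma nextComp_injective : Function.Injective (nextComp G) := by
  suffices h : ∀ C D, entry G C < entry G D → nextComp G C ≠ nextComp G D by
    intro C D hCD
    by_contra hne
    rcases (entry_injective.ne hne).lt_or_gt with hlt | hlt
    exacts [h C D hlt hCD, h D C hlt hCD.symm]
  intro C D hCD heq
  obtain ⟨hC, hCmin⟩ := entry_nextComp_of_exists_lt ⟨D, hCD⟩
  by_cases hD : ∃ E, entry G D < entry G E
  · exact ((hCmin D hCD).trans_lt (entry_nextComp_of_exists_lt hD).1).ne (congrArg _ heq)
  · push Not at hD
    exact ((entry_nextComp_le_of_forall_le hD C).trans_lt hC).ne (congrArg _ heq.symm)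

lemma nextComp_bijective : Function.Bijective (nextComp G) :=
  Finite.injective_iff_bijective.1 nextComp_injective

lemma nextComp_ne [Nontrivial G.ConnectedComponent] (C : G.ConnectedComponent) :
    nextComp G C ≠ C := by
  intro h
  by_cases hC : ∃ D, entry G C < entry G D
  · exact (entry_nextComp_of_exists_lt hC).1.ne' (by rw [h])
  · push Not at hC
    obtain ⟨D, hD⟩ := exists_ne C
    have := entry_nextComp_le_of_forall_le hC D
    rw [h] at this
    exact hD (entry_injective (le_antisymm (hC D) this))

lemma edgeSet_chainMap : (chainMap G).edgeSet =
    G.edgeSet \ Set.range (bridgeEdge G) ∪ Set.range (chainEdge G) \ Sym2.diagSet := by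
  simp only [chainMap, edgeSet_sup, edgeSet_deleteEdges, edgeSet_fromEdgeSet, Set.range,
    bridgeEdge, chainEdge, eq_comm]

lemma connectedComponentMk_of_mem_bridgeEdge {C : G.ConnectedComponent} {v : Fin n}
    (hv : v ∈ bridgeEdge G C) : G.connectedComponentMk v = C := by
  rcases Sym2.mem_iff.1 hv with rfl | rfl <;> simp

lemma bridgeEdge_injective : Function.Injective (bridgeEdge G) := fun C D h => by
  have : entry G C ∈ bridgeEdge G D := h ▸ Sym2.mem_mk_left _ _
  simpa using connectedComponentMk_of_mem_bridgeEdge this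

lemma bridgeEdge_mem_edgeSet_or_isDiag (C : G.ConnectedComponent) :
    bridgeEdge G C ∈ G.edgeSet ∨ (bridgeEdge G C).IsDiag := by
  rcases exitV_eq_or_adj C with h | h
  · exact Or.inr (by simp [bridgeEdge, h])
  · exact Or.inl h

lemma bridgeEdge_mem_edgeSet (hG : ∀ v, ¬G.IsIsolated v) (C : G.ConnectedComponent) :
    bridgeEdge G C ∈ G.edgeSet :=
  adj_entry_exitV (hG _)

lemma chainEdge_injective (hG : ∀ v, ¬G.IsIsolated v) : Function.Injective (chainEdge G) := by
  intro C D h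
  rcases Sym2.eq_iff.1 h with ⟨h, -⟩ | ⟨h, -⟩
  · simpa using congrArg G.connectedComponentMk h
  · have hCD : C = nextComp G D := by simpa using congrArg G.connectedComponentMk h
    exact absurd (h.trans (by rw [hCD])) (exitV_ne_entry (hG _))

lemma connectedComponentMk_exitV_ne {C : G.ConnectedComponent} (hC : nextComp G C ≠ C) :
    G.connectedComponentMk (exitV G C) ≠ G.connectedComponentMk (entry G (nextComp G C)) := by
  simpa using hC.symm

lemma chainEdge_notMem_edgeSet {C : G.ConnectedComponent} (hC : nextComp G C ≠ C) :
    chainEdge G C ∉ G.edgeSet := fun h =>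
  connectedComponentMk_exitV_ne hC (ConnectedComponent.connectedComponentMk_eq_of_adj h)

lemma not_isDiag_chainEdge {C : G.ConnectedComponent} (hC : nextComp G C ≠ C) :
    ¬(chainEdge G C).IsDiag := fun h =>
  connectedComponentMk_exitV_ne hC (congrArg _ (Sym2.mk_isDiag_iff.1 h))

lemma chainMap_eq_self [Subsingleton G.ConnectedComponent] : chainMap G = G := by
  have hchain : chainEdge G = bridgeEdge G := funext fun C => by
    rw [chainEdge, Subsingleton.elim (nextComp G C) C, bridgeEdge, Sym2.eq_swap]
  apply edgeSet_injective
  rw [edgeSet_chainMap, hchain]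
  ext e
  constructor
  · rintro (⟨he, -⟩ | ⟨⟨C, rfl⟩, hdiag⟩)
    exacts [he, (bridgeEdge_mem_edgeSet_or_isDiag C).resolve_right hdiag]
  · intro he
    by_cases hB : e ∈ Set.range (bridgeEdge G)
    exacts [Or.inr ⟨hB, G.not_isDiag_of_mem_edgeSet he⟩, Or.inl ⟨he, hB⟩]

lemma card_filter_mem_bridgeEdge (hG : ∀ v, ¬G.IsIsolated v) (v : Fin n) :
    #{C | v ∈ bridgeEdge G C} = #{C | entry G C = v} + #{C | exitV G C = v} := by
  rw [← card_union_of_disjoint, ← filter_or]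
  · congr 1; ext C; simp [bridgeEdge, eq_comm]
  · exact disjoint_filter.2 fun C _ h1 h2 => exitV_ne_entry (hG _) (h2.trans h1.symm)

lemma card_filter_mem_chainEdge [Nontrivial G.ConnectedComponent] (v : Fin n) :
    #{C | v ∈ chainEdge G C} = #{C | exitV G C = v} + #{C | entry G C = v} := by
  have hnext : #{C | entry G (nextComp G C) = v} = #{C | entry G C = v} :=
    card_bijective _ nextComp_bijective (by simp)
  rw [← hnext, ← card_union_of_disjoint, ← filter_or]
  · congr 1; ext C; simp [chainEdge, eq_comm]
  · exact disjoint_filter.2 fun C _ h1 h2 =>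
      connectedComponentMk_exitV_ne (nextComp_ne C) (congrArg _ (h1.trans h2.symm))

theorem degree_chainMap (hG : ∀ v, ¬G.IsIsolated v) (v : Fin n) :
    (chainMap G).degree v = G.degree v := by
  rcases subsingleton_or_nontrivial G.ConnectedComponent with _ | _
  · rw [chainMap_eq_self]
  have := degree_add_card_filter_mem_of_edgeSet_eq (G := G) (H := chainMap G)
    (univ.image (bridgeEdge G)) (univ.image (chainEdge G)) ?_ ?_ ?_ v
  · rw [filter_image, filter_image, card_image_of_injective _ bridgeEdge_injective,
      card_image_of_injective _ (chainEdge_injective hG), card_filter_mem_bridgeEdge hG,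
      card_filter_mem_chainEdge] at this
    omega
  · simpa [Set.range_subset_iff] using bridgeEdge_mem_edgeSet hG
  · simpa [Set.disjoint_left] using fun C => chainEdge_notMem_edgeSet (nextComp_ne C)
  · have hdiag : Set.range (chainEdge G) \ Sym2.diagSet = Set.range (chainEdge G) :=
      sdiff_eq_left.2 <| by
        simpa [Set.disjoint_left] using fun C => not_isDiag_chainEdge (nextComp_ne C)
    rw [edgeSet_chainMap, hdiag]
    simp

lemma reachable_chainMap_entry_exitV (heven : ∀ v, Even (G.degree v)) (C : G.ConnectedComponent) :
    (chainMap G).Reachable (entry G C) (exitV G C) := by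
  rcases exitV_eq_or_adj C with h | h
  · rw [h]
  have hKeven (v : Fin n) : Even (C.toSimpleGraph.spanningCoe.degree v) := by
    rw [degree_spanningCoe_toSimpleGraph]
    split_ifs
    exacts [heven v, Even.zero]
  have hKadj : C.toSimpleGraph.spanningCoe.Adj (entry G C) (exitV G C) :=
    (ConnectedComponent.adj_spanningCoe_toSimpleGraph C).2 ⟨by simp, h⟩
  have hK := not_isBridge_of_forall_even_degree hKeven hKadj
  rw [isBridge_iff, not_not] at hK
  refine hK.mono fun u w huw => ?_
  rw [deleteEdges_adj, ConnectedComponent.adj_spanningCoe_toSimpleGraph] at huw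
  obtain ⟨⟨hu, huw⟩, hne⟩ := huw
  rw [← mem_edgeSet, edgeSet_chainMap]
  refine Or.inl ⟨huw, ?_⟩
  rintro ⟨D, hD⟩
  have hDC : D = C :=
    (connectedComponentMk_of_mem_bridgeEdge (hD ▸ Sym2.mem_mk_left u w)).symm.trans
      ((ConnectedComponent.mem_supp_iff _ _).1 hu)
  exact hne (by rw [← hD, hDC]; rfl)

lemma reachable_chainMap_of_adj (heven : ∀ v, Even (G.degree v)) {u v : Fin n}
    (h : G.Adj u v) : (chainMap G).Reachable u v := by
  by_cases hB : s(u, v) ∈ Set.range (bridgeEdge G)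
  · obtain ⟨C, hC⟩ := hB
    rcases Sym2.eq_iff.1 hC with ⟨rfl, rfl⟩ | ⟨rfl, rfl⟩
    exacts [reachable_chainMap_entry_exitV heven C, (reachable_chainMap_entry_exitV heven C).symm]
  · exact Adj.reachable (by rw [← mem_edgeSet, edgeSet_chainMap]; exact Or.inl ⟨h, hB⟩)

lemma reachable_chainMap_entry_nextComp (heven : ∀ v, Even (G.degree v))
    (C : G.ConnectedComponent) : (chainMap G).Reachable (entry G C) (entry G (nextComp G C)) := by
  by_cases hC : nextComp G C = C
  · rw [hC]
  refine (reachable_chainMap_entry_exitV heven C).trans (Adj.reachable ?_)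
  rw [← mem_edgeSet, edgeSet_chainMap]
  exact Or.inr ⟨⟨C, rfl⟩, not_isDiag_chainEdge hC⟩

theorem chainMap_preconnected (heven : ∀ v, Even (G.degree v)) : (chainMap G).Preconnected := by
  intro u v
  have : Nonempty G.ConnectedComponent := ⟨G.connectedComponentMk u⟩
  obtain ⟨Cmax, hCmax⟩ := Finite.exists_max (entry G)
  have hclimb (C : G.ConnectedComponent) : (chainMap G).Reachable (entry G C) (entry G Cmax) := by
    induction C using (InvImage.wf (entry G) wellFounded_gt).induction with
    | _ C ih =>
      rcases (hCmax C).lt_or_eq with hlt | heq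
      · exact (reachable_chainMap_entry_nextComp heven C).trans
          (ih _ (entry_nextComp_of_exists_lt ⟨Cmax, hlt⟩).1)
      · rw [entry_injective heq]
  have hentry (w : Fin n) : (chainMap G).Reachable w (entry G (G.connectedComponentMk w)) :=
    (ConnectedComponent.exact (by simp)).of_forall_adj_reachable
      fun _ _ => reachable_chainMap_of_adj heven
  exact ((hentry u).trans (hclimb _)).trans ((hentry v).trans (hclimb _)).symm

end

theorem chainMap_into_and_onto_general (r n : ℕ) (hr : 2 ≤ r) (hn : 2 * r + 1 ≤ n) :
    (∀ GS : SimpleGraph (Fin n), GS.IsRegularOfDegree (2 * r) →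
      (chainMap GS).Connected ∧ (chainMap GS).IsRegularOfDegree (2 * r)) ∧
    (∀ G : SimpleGraph (Fin n), G.Connected → G.IsRegularOfDegree (2 * r) →
      ∃ GS : SimpleGraph (Fin n), GS.IsRegularOfDegree (2 * r) ∧ chainMap GS = G) := by
  refine ⟨fun GS hreg => ?_, fun G hconn hreg => ?_⟩
  · have heven (v : Fin n) : Even (GS.degree v) := hreg v ▸ even_two_mul r
    have hG (v : Fin n) : ¬GS.IsIsolated v := by
      rw [← exists_adj_iff_not_isIsolated, ← degree_pos_iff_exists_adj, hreg v]
      omega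
    have : Nonempty (Fin n) := ⟨⟨0, by omega⟩⟩
    exact ⟨⟨chainMap_preconnected heven⟩, fun v => (degree_chainMap hG v).trans (hreg v)⟩
  · have := hconn.preconnected.subsingleton_connectedComponent
    exact ⟨G, hreg, chainMap_eq_self⟩

/-- Let `r ≥ 2` and `n ≥ max{8, 2r+1}`, let `Ω_S` be the set of all
`2r`-regular simple graphs on `{1,…,n}` and `Ω_F` the subset of connected such graphs,
and let `h` be the chaining map.  Then `h(G_S)` is connected and `2r`-regular for every
`G_S ∈ Ω_S`, and `h` is a surjection onto `Ω_F`. -/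
theorem chainMap_into_and_onto (r n : ℕ) (hr : 2 ≤ r) (h8 : 8 ≤ n) (hn : 2 * r + 1 ≤ n) :
    (∀ GS : SimpleGraph (Fin n), GS.IsRegularOfDegree (2 * r) →
      (chainMap GS).Connected ∧ (chainMap GS).IsRegularOfDegree (2 * r)) ∧
    (∀ G : SimpleGraph (Fin n), G.Connected → G.IsRegularOfDegree (2 * r) →
      ∃ GS : SimpleGraph (Fin n), GS.IsRegularOfDegree (2 * r) ∧ chainMap GS = G) :=
  chainMap_into_and_onto_general r n hr hn

end
end
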